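/- Let A = [[0,1],[1,0]] be the adjacency matrix of the two-node graph, take O = 1, and carry out the cluster-state construction: X = (1+A²)^{-1/2}, Y = A(1+A²)^{-1/2}, S = fromBlocks X (−Y) Y X. Then S equals (1/√2)·[[1,0,0,−1],[0,1,−1,0],[0,1,1,0],[1,0,0,1]], and for every s > 0, S · diag(s,s,s⁻¹,s⁻¹) · Sᵀ equals the 4×4 matrix Γ_EPR(λ,μ) = [[λ,0,0,μ],[0,λ,μ,0],[0,μ,λ,0],[μ,0,0,λ]] with λ = (s+s⁻¹)/2 and μ = (s−s⁻¹)/2. -/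

import Mathlib

/-! Since `A² = 1`, the matrix `1 + A²` is the scalar `2`, and the spectral square root in
`invSqrtOnePlusSq` is the continuous functional calculus, which sends a scalar `c` to `√c`.
Hence `X = 2^{-1/2}`, `Y = 2^{-1/2} A` and `S = 2^{-1/2} [[1, -A], [A, 1]]`. For any symmetric
involution `J`, conjugating `diag(s, t)` by `[[1, -J], [J, 1]]` gives
`[[(s+t), (s-t) J], [(s-t) J, (s+t)]]`; with `t = s⁻¹` and the factor `1/2` this is `Γ_EPR`. -/

open Matrix

noncomputable section

/-- For a real symmetric matrix `A`, the matrix `1 + A²` is positive definite. -/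
theorem onePlusSq_posDef {n : ℕ} (A : Matrix (Fin n) (Fin n) ℝ) (hA : Aᵀ = A) :
    (1 + A * A).PosDef := by
  have h2 : (A * A).PosSemidef := by
    have h := Matrix.posSemidef_conjTranspose_mul_self A
    simpa [Matrix.conjTranspose_eq_transpose_of_trivial, hA] using h
  exact Matrix.PosDef.add_posSemidef Matrix.PosDef.one h2

/-- `(1 + A²)^{-1/2}`: the inverse of the unique positive-definite square root of `1 + A²`. -/
def invSqrtOnePlusSq {n : ℕ} (A : Matrix (Fin n) (Fin n) ℝ) (hA : Aᵀ = A) :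
    Matrix (Fin n) (Fin n) ℝ :=
  (((onePlusSq_posDef A hA).posSemidef.1.eigenvectorUnitary : Matrix (Fin n) (Fin n) ℝ) *
    diagonal (Real.sqrt ∘ (onePlusSq_posDef A hA).posSemidef.1.eigenvalues) *
    star ((onePlusSq_posDef A hA).posSemidef.1.eigenvectorUnitary : Matrix (Fin n) (Fin n) ℝ))⁻¹

/-- Covariance matrix `diag(s,…,s,s⁻¹,…,s⁻¹)` of `n` equally squeezed vacuum modes. -/
def GammaSqz (n : ℕ) (s : ℝ) : Matrix (Fin n ⊕ Fin n) (Fin n ⊕ Fin n) ℝ :=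
  Matrix.fromBlocks (s • 1) 0 0 (s⁻¹ • 1)

/-- The 4×4 EPR covariance matrix with diagonal entries `l` and antidiagonal
entries `m`, in ordering `(Q₁,Q₂,P₁,P₂)`. -/
def GammaEPR (l m : ℝ) : Matrix (Fin 2 ⊕ Fin 2) (Fin 2 ⊕ Fin 2) ℝ :=
  Matrix.fromBlocks (l • 1) (m • !![0,1;1,0]) (m • !![0,1;1,0]) (l • 1)

/-- Adjacency matrix of the two-node graph. -/
def A2 : Matrix (Fin 2) (Fin 2) ℝ := !![0,1;1,0]

theorem A2_symm : A2ᵀ = A2 := by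
  ext i j
  fin_cases i <;> fin_cases j <;> simp [A2, Matrix.transpose_apply]

lemma invSqrtOnePlusSq_eq_inv_cfc_sqrt {n : ℕ} (A : Matrix (Fin n) (Fin n) ℝ) (hA : Aᵀ = A) :
    invSqrtOnePlusSq A hA = (cfc Real.sqrt (1 + A * A))⁻¹ := by
  rw [(onePlusSq_posDef A hA).posSemidef.1.cfc_eq, IsHermitian.cfc, Unitary.conjStarAlgAut_apply]
  rfl

lemma invSqrtOnePlusSq_of_mul_self_eq_one {n : ℕ} (A : Matrix (Fin n) (Fin n) ℝ) (hA : Aᵀ = A)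
    (hAA : A * A = 1) : invSqrtOnePlusSq A hA = (√2)⁻¹ • 1 := by
  have h : 1 + A * A = algebraMap ℝ _ 2 := by
    rw [hAA, Algebra.algebraMap_eq_smul_one]; norm_num [two_smul]
  rw [invSqrtOnePlusSq_eq_inv_cfc_sqrt, h, cfc_algebraMap, Algebra.algebraMap_eq_smul_one]
  refine inv_eq_right_inv ?_
  rw [smul_mul_smul, mul_one, mul_inv_cancel₀ (by positivity), one_smul]

lemma fromBlocks_involution_mul_fromBlocks_smul_one_mul_transpose {n : Type*} [Fintype n]
    [DecidableEq n] (J : Matrix n n ℝ) (hJ : J * J = 1) (hJT : Jᵀ = J) (s t : ℝ) :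
    fromBlocks 1 (-J) J 1 * fromBlocks (s • 1) 0 0 (t • 1) * (fromBlocks 1 (-J) J 1)ᵀ =
      fromBlocks ((s + t) • 1) ((s - t) • J) ((s - t) • J) ((s + t) • 1) := by
  rw [fromBlocks_transpose, hJT, fromBlocks_multiply, fromBlocks_multiply]
  simp only [Algebra.mul_smul_comm, mul_one, mul_zero, add_zero, transpose_one, smul_neg, zero_add,
    transpose_neg, hJT, mul_neg, neg_mul, Algebra.smul_mul_assoc, hJ, neg_neg, one_mul,
    fromBlocks_inj, and_self_left]
  exact ⟨(add_smul s t 1).symm, by module, (add_smul s t 1).symm⟩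

/-- For the two-node graph with `O = 1`, the cluster-construction matrix `S` equals
`(1/√2)·[[1,0,0,−1],[0,1,−1,0],[0,1,1,0],[1,0,0,1]]`, and for every `s > 0`,
`S diag(s,s,s⁻¹,s⁻¹) Sᵀ = Γ_EPR((s+s⁻¹)/2, (s−s⁻¹)/2)`. -/
theorem two_mode_cluster :
    Matrix.fromBlocks (invSqrtOnePlusSq A2 A2_symm) (-(A2 * invSqrtOnePlusSq A2 A2_symm))
        (A2 * invSqrtOnePlusSq A2 A2_symm) (invSqrtOnePlusSq A2 A2_symm) =
      (Real.sqrt 2)⁻¹ •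
        Matrix.fromBlocks (1 : Matrix (Fin 2) (Fin 2) ℝ) (-!![0,1;1,0]) !![0,1;1,0] 1 ∧
    ∀ s : ℝ, 0 < s →
      Matrix.fromBlocks (invSqrtOnePlusSq A2 A2_symm) (-(A2 * invSqrtOnePlusSq A2 A2_symm))
          (A2 * invSqrtOnePlusSq A2 A2_symm) (invSqrtOnePlusSq A2 A2_symm) *
        GammaSqz 2 s *
        (Matrix.fromBlocks (invSqrtOnePlusSq A2 A2_symm) (-(A2 * invSqrtOnePlusSq A2 A2_symm))
            (A2 * invSqrtOnePlusSq A2 A2_symm) (invSqrtOnePlusSq A2 A2_symm))ᵀ =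
      GammaEPR ((s + s⁻¹) / 2) ((s - s⁻¹) / 2) := by
  have hA2 : A2 * A2 = 1 := by
    ext i j
    fin_cases i <;> fin_cases j <;> simp [A2]
  have hS : Matrix.fromBlocks (invSqrtOnePlusSq A2 A2_symm) (-(A2 * invSqrtOnePlusSq A2 A2_symm))
      (A2 * invSqrtOnePlusSq A2 A2_symm) (invSqrtOnePlusSq A2 A2_symm) =
      (√2)⁻¹ • fromBlocks 1 (-A2) A2 1 := by
    rw [invSqrtOnePlusSq_of_mul_self_eq_one A2 A2_symm hA2, fromBlocks_smul]
    simp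
  refine ⟨hS, fun s _ => ?_⟩
  rw [hS, transpose_smul, Matrix.smul_mul, smul_mul_smul_comm, GammaSqz,
    fromBlocks_involution_mul_fromBlocks_smul_one_mul_transpose A2 hA2 A2_symm, GammaEPR,
    fromBlocks_smul, ← mul_inv, Real.mul_self_sqrt zero_le_two]
  simp only [smul_smul, inv_mul_eq_div]
  rfl
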